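/- arXiv:1802.08112 — 5 statements merged into one kernel-verified Lean document; each statement's English description precedes it below -/
import Mathlib

section
/- Let U_A(θ) = G(q̄+θ) - p(q̄+θ) be the payoff of strategy A (consume q* = q̄+θ, no rebate) and U_B(θ) = G(q̄+θ - p₂/γ - θ) - p(q̄+θ - p₂/γ) + p₂(q_{t-1} - (q̄+θ - p₂/γ)) the payoff of strategy B (reduce consumption by p₂/γ and collect rebate relative to baseline q_{t-1}), where G(x) = -(γ/2)(x - q̄)² + p(x - q̄) + k evaluated appropriately. Then U_A(θ) = U_B(θ) if and only if θ = q_{t-1} - q̄ + p₂/(2γ). -/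
/-- Indifference between strategy A (consume `q̄ + θ`, no rebate) and strategy B
(consume `q̄ + θ - p₂/γ`, collecting rebate relative to baseline `qtm1`)
holds exactly at `θ = qtm1 - q̄ + p₂/(2γ)`. -/
theorem stmt2 (γ p p₂ k qbar qtm1 θ : ℝ) (hγ : 0 < γ) (hp : 0 < p) (hp₂ : 0 < p₂)
    (UA UB : ℝ → ℝ)
    (hUA : ∀ t, UA t = (-(γ/2)*(qbar - qbar)^2 + p*(qbar - qbar) + k) - p*(qbar + t))
    (hUB : ∀ t, UB t = (-(γ/2)*((qbar - p₂/γ) - qbar)^2 + p*((qbar - p₂/γ) - qbar) + k)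
        - p*(qbar + t - p₂/γ) + p₂*(qtm1 - (qbar + t - p₂/γ))) :
    UA θ = UB θ ↔ θ = qtm1 - qbar + p₂/(2*γ) := by
  rw [hUA, hUB]
  have hγ' : γ ≠ 0 := hγ.ne'
  have hp₂' : p₂ ≠ 0 := hp₂.ne'
  constructor
  · intro h
    have h2 : p₂ * (qtm1 - qbar - θ) + p₂^2/(2*γ) = 0 := by linear_combination (norm := (field_simp; ring)) -h
    have h3 : θ - (qtm1 - qbar + p₂/(2*γ)) = 0 := by
      field_simp at h2 ⊢
      nlinarith [h2]
    linarith [h3]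
  · intro h
    subst h
    field_simp
    ring
end

section
/- For θ > q_{t-1} - q̄ + p₂/(2γ), the payoff of strategy A strictly exceeds that of strategy B, and for θ < q_{t-1} - q̄ + p₂/(2γ) the payoff of strategy B strictly exceeds that of strategy A. -/
/-- For `θ` above the critical value `qtm1 - q̄ + p₂/(2γ)` strategy A strictly beats
strategy B, and below it strategy B strictly beats strategy A. -/
theorem stmt3 (γ p p₂ k qbar qtm1 : ℝ) (hγ : 0 < γ) (hp : 0 < p) (hp₂ : 0 < p₂)
    (UA UB : ℝ → ℝ)
    (hUA : ∀ t, UA t = (-(γ/2)*(qbar - qbar)^2 + p*(qbar - qbar) + k) - p*(qbar + t))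
    (hUB : ∀ t, UB t = (-(γ/2)*((qbar - p₂/γ) - qbar)^2 + p*((qbar - p₂/γ) - qbar) + k)
        - p*(qbar + t - p₂/γ) + p₂*(qtm1 - (qbar + t - p₂/γ))) :
    (∀ θ, θ > qtm1 - qbar + p₂/(2*γ) → UB θ < UA θ) ∧
    (∀ θ, θ < qtm1 - qbar + p₂/(2*γ) → UA θ < UB θ) := by
  have hγ' := hγ.ne'
  have ha : p₂/γ * γ = p₂ := div_mul_cancel₀ _ hγ'
  have hap : 0 < p₂/γ := div_pos hp₂ hγ
  have hb : p₂/(2*γ) = (p₂/γ)/2 := by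
    rw [div_div]; ring_nf
  constructor <;> intro θ hθ <;> rw [hUA, hUB] <;> rw [hb] at hθ <;>
    nlinarith [mul_pos (mul_pos hap hγ) hp₂, mul_pos hap hγ,
      mul_lt_mul_of_pos_left hθ (mul_pos hap hγ)]
end

section
/- Let F(b) = −(γ/2)(b − q̄)² + p(b − q̄) − p·b + p₂·(b − q̄ + p₂/(2γ) + θ̄)²/(4θ̄) (up to an additive constant independent of b), γ, p, p₂, θ̄ > 0. If p₂ < γ·2θ̄, F is strictly concave and its stationary point is b* = q̄ − p₂/(2γ) + 2p₂θ̄/(2θ̄γ − p₂); moreover b* lies in [q̄ − θ̄ − p₂/(2γ), q̄ + θ̄ − p₂/(2γ)] if and only if p₂ ≤ (2/3)θ̄γ (for p₂ ≥ 0). -/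
/-!
`F'(b) = -γ (b - q̄) + p₂ (b - q̄ + p₂/(2γ) + θ̄)/(2θ̄)` is affine in `b`, and it factors as
`(p₂/(2θ̄) - γ) (b - b*)`. The slope `p₂/(2θ̄) - γ` is negative exactly when `p₂ < 2γθ̄`,
which gives strict concavity and the stationary point at once. Writing
`b* = (q̄ - p₂/(2γ)) + d` with `d = 2p₂θ̄/(2θ̄γ - p₂) > 0`, the point `b*` lies in the interval
of radius `θ̄` around `q̄ - p₂/(2γ)` iff `d ≤ θ̄`, i.e. iff `3p₂ ≤ 2θ̄γ`.
-/

open Set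

namespace PeakTimeRebate

variable (γ p p₂ qbar θb : ℝ)

noncomputable def payoff (b : ℝ) : ℝ :=
  -(γ/2)*(b - qbar)^2 + p*(b - qbar) - p*b + p₂*(b - qbar + p₂/(2*γ) + θb)^2/(4*θb)

noncomputable def stationaryPoint : ℝ :=
  qbar - p₂/(2*γ) + 2*p₂*θb/(2*θb*γ - p₂)

theorem hasDerivAt_payoff (b : ℝ) :
    HasDerivAt (payoff γ p p₂ qbar θb)
      (-γ*(b - qbar) + p₂*(b - qbar + p₂/(2*γ) + θb)/(2*θb)) b := by
  have hlin (c : ℝ) : HasDerivAt (fun x : ℝ => x + c) 1 b := (hasDerivAt_id' b).add_const c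
  have h := (((((hlin (-qbar)).fun_pow 2).const_mul (-(γ/2))).add ((hlin (-qbar)).const_mul p)).sub
    ((hasDerivAt_id' b).const_mul p)).add
    ((((hlin (-qbar + p₂/(2*γ) + θb)).fun_pow 2).const_mul p₂).div_const (4*θb))
  refine (h.congr_deriv (by push_cast; ring)).congr_of_eventuallyEq (.of_forall fun x => ?_)
  simp only [payoff, Pi.add_apply, Pi.sub_apply]
  ring

variable {γ p₂ θb}

theorem deriv_payoff (hγ : γ ≠ 0) (hθb : θb ≠ 0) (hreg : 2*θb*γ - p₂ ≠ 0) :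
    deriv (payoff γ p p₂ qbar θb) =
      fun b => (p₂/(2*θb) - γ) * (b - stationaryPoint γ p₂ qbar θb) := by
  funext b
  rw [(hasDerivAt_payoff γ p p₂ qbar θb b).deriv, stationaryPoint]
  generalize hD : 2*θb*γ - p₂ = D at hreg ⊢
  field_simp
  rw [← hD]
  ring

theorem strictConcaveOn_payoff (hγ : γ ≠ 0) (hθb : 0 < θb) (hreg : p₂ < γ*(2*θb)) :
    StrictConcaveOn ℝ univ (payoff γ p p₂ qbar θb) := by
  have hslope : p₂/(2*θb) - γ < 0 := by
    rw [sub_neg, div_lt_iff₀ (by positivity)]; linarith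
  have hdiff : Differentiable ℝ (payoff γ p p₂ qbar θb) := fun b =>
    (hasDerivAt_payoff γ p p₂ qbar θb b).differentiableAt
  refine strictConcaveOn_univ_of_deriv2_neg hdiff.continuous fun b => ?_
  rw [Function.iterate_succ_apply, Function.iterate_one,
    deriv_payoff p qbar hγ hθb.ne' (by linarith)]
  simpa [deriv_const_mul_field'] using hslope

theorem deriv_payoff_stationaryPoint (hγ : γ ≠ 0) (hθb : θb ≠ 0) (hreg : 2*θb*γ - p₂ ≠ 0) :
    deriv (payoff γ p p₂ qbar θb) (stationaryPoint γ p₂ qbar θb) = 0 := by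
  simp [deriv_payoff p qbar hγ hθb hreg]

theorem stationaryPoint_mem_Icc_iff (hp₂ : 0 ≤ p₂) (hθb : 0 < θb) (hreg : p₂ < γ*(2*θb)) :
    stationaryPoint γ p₂ qbar θb ∈ Icc (qbar - θb - p₂/(2*γ)) (qbar + θb - p₂/(2*γ)) ↔
      p₂ ≤ (2/3)*θb*γ := by
  have hD : 0 < 2*θb*γ - p₂ := by linarith
  have hd : 0 ≤ 2*p₂*θb/(2*θb*γ - p₂) := by positivity
  have hd_le : 2*p₂*θb/(2*θb*γ - p₂) ≤ θb ↔ p₂ ≤ (2/3)*θb*γ := by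
    rw [div_le_iff₀ hD]
    constructor <;> intro h <;> nlinarith
  rw [← hd_le, mem_Icc, stationaryPoint]
  constructor
  · rintro ⟨-, h⟩; linarith
  · intro h; constructor <;> linarith

end PeakTimeRebate

open PeakTimeRebate in
theorem stmt7_general (γ p p₂ qbar θb : ℝ) (hγ : 0 < γ) (hp₂ : 0 < p₂)
    (hθb : 0 < θb) (hreg : p₂ < γ*(2*θb))
    (F : ℝ → ℝ)
    (hF : ∀ b, F b = -(γ/2)*(b - qbar)^2 + p*(b - qbar) - p*b
        + p₂*(b - qbar + p₂/(2*γ) + θb)^2/(4*θb))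
    (bstar : ℝ)
    (hbstar : bstar = qbar - p₂/(2*γ) + 2*p₂*θb/(2*θb*γ - p₂)) :
    StrictConcaveOn ℝ Set.univ F ∧
    deriv F bstar = 0 ∧
    (bstar ∈ Set.Icc (qbar - θb - p₂/(2*γ)) (qbar + θb - p₂/(2*γ)) ↔
      p₂ ≤ (2/3)*θb*γ) := by
  obtain rfl : F = payoff γ p p₂ qbar θb := funext hF
  obtain rfl : bstar = stationaryPoint γ p₂ qbar θb := hbstar
  exact ⟨strictConcaveOn_payoff p qbar hγ.ne' hθb hreg,
    deriv_payoff_stationaryPoint p qbar hγ.ne' hθb.ne' (by linarith),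
    stationaryPoint_mem_Icc_iff qbar hp₂.le hθb hreg⟩

/-- If `p₂ < 2γθ̄`, the expected two-period payoff `F` is strictly concave with
stationary point `b* = q̄ - p₂/(2γ) + 2p₂θ̄/(2θ̄γ - p₂)`, and `b*` lies in the
strategy-AB interval iff `p₂ ≤ (2/3)θ̄γ`. -/
theorem stmt7 (γ p p₂ qbar θb : ℝ) (hγ : 0 < γ) (hp : 0 < p) (hp₂ : 0 < p₂)
    (hθb : 0 < θb) (hreg : p₂ < γ*(2*θb))
    (F : ℝ → ℝ)
    (hF : ∀ b, F b = -(γ/2)*(b - qbar)^2 + p*(b - qbar) - p*b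
        + p₂*(b - qbar + p₂/(2*γ) + θb)^2/(4*θb))
    (bstar : ℝ)
    (hbstar : bstar = qbar - p₂/(2*γ) + 2*p₂*θb/(2*θb*γ - p₂)) :
    StrictConcaveOn ℝ Set.univ F ∧
    deriv F bstar = 0 ∧
    (bstar ∈ Set.Icc (qbar - θb - p₂/(2*γ)) (qbar + θb - p₂/(2*γ)) ↔
      p₂ ≤ (2/3)*θb*γ) :=
  stmt7_general γ p p₂ qbar θb hγ hp₂ hθb hreg F hF bstar hbstar
end

section
/- For γ, p, p₂ > 0 with p₂ > p, the function b ↦ −(γ/2)(b − q̄)² + p(b − q̄) − p·b + p₂·b is strictly increasing on [q̄, q̄ + p/γ] and, since the utility saturates at q̄ + p/γ, the net payoff on [q̄ + p/γ, q_max] equals (constant) + (p₂ − p)·b, which is strictly increasing; hence the maximizer over [0, q_max] is b = q_max. -/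
/-- When the incentive exceeds the retail price (`p₂ > p`), the baseline-period
net payoff is strictly increasing both before and after the saturation point
`q̄ + p/γ`, hence the maximizer over `[0, q_max]` is `q_max`. -/
theorem stmt9 (γ p p₂ k qbar qmax : ℝ) (hγ : 0 < γ) (hp : 0 < p) (hp₂ : 0 < p₂)
    (hpp : p < p₂) (hqmax : qbar + p/γ < qmax) (hqbar : 0 ≤ qbar)
    (N : ℝ → ℝ)
    (hN : ∀ b, N b = (if b ≤ qbar + p/γ then -(γ/2)*(b - qbar)^2 + p*(b - qbar) + k
        else p^2/(2*γ) + k) - p*b + p₂*b) :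
    StrictMonoOn (fun b => -(γ/2)*(b - qbar)^2 + p*(b - qbar) - p*b + p₂*b)
      (Set.Icc qbar (qbar + p/γ)) ∧
    StrictMonoOn (fun b => (p^2/(2*γ) + k) + (p₂ - p)*b)
      (Set.Icc (qbar + p/γ) qmax) ∧
    (∀ b ∈ Set.Icc (qbar + p/γ) qmax, N b = (p^2/(2*γ) + k) + (p₂ - p)*b) ∧
    (∀ b ∈ Set.Icc (0:ℝ) qmax, b ≠ qmax → N b < N qmax) := by
  have hNq : N qmax = (p^2/(2*γ) + k) + (p₂ - p)*qmax := by
    rw [hN, if_neg (not_le.mpr hqmax)]; ring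
  refine ⟨?_, ?_, ?_, ?_⟩
  · intro x hx y hy hxy
    simp only [Set.mem_Icc] at hx hy
    have h1 : γ * (x - qbar) ≤ p := by
      have := hx.2
      have : x - qbar ≤ p / γ := by linarith
      calc γ * (x - qbar) ≤ γ * (p/γ) := by nlinarith
        _ = p := by field_simp
    have h2 : γ * (y - qbar) ≤ p := by
      have : y - qbar ≤ p / γ := by linarith [hy.2]
      calc γ * (y - qbar) ≤ γ * (p/γ) := by nlinarith
        _ = p := by field_simp
    simp only
    nlinarith [mul_pos (sub_pos.mpr hpp) (sub_pos.mpr hxy)]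
  · intro x _ y _ hxy
    simp only
    nlinarith [mul_pos (sub_pos.mpr hpp) (sub_pos.mpr hxy)]
  · intro b hb
    simp only [Set.mem_Icc] at hb
    rw [hN]
    rcases eq_or_lt_of_le hb.1 with h | h
    · rw [if_pos (le_of_eq h.symm), ← h]
      field_simp
      ring
    · rw [if_neg (not_le.mpr h)]; ring
  · intro b hb hne
    simp only [Set.mem_Icc] at hb
    have hblt : b < qmax := lt_of_le_of_ne hb.2 hne
    rw [hN, hNq]
    by_cases h : b ≤ qbar + p/γ
    · rw [if_pos h]
      have hbq : γ * b ≤ γ * qbar + p := by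
        have : γ * b ≤ γ * (qbar + p/γ) := by nlinarith
        have hpg : γ * (p/γ) = p := by field_simp
        nlinarith
      have h2γ : p^2/(2*γ)*(2*γ) = p^2 := by field_simp
      nlinarith [h2γ, sq_nonneg (p - γ*(b - qbar)),
        mul_pos hγ (mul_pos (sub_pos.mpr hpp) (sub_pos.mpr hblt))]
    · rw [if_neg h]
      nlinarith [mul_pos (sub_pos.mpr hpp) (sub_pos.mpr hblt)]
end

section
/- Let b*(p₂; θ̄) = q̄ − p₂/(2γ) + 2p₂θ̄/(2θ̄γ − p₂). For fixed p₂ with 0 < p₂ < (2/3)θ̄₁γ ≤ (2/3)θ̄₂γ and θ̄₁ < θ̄₂, we have b*(p₂; θ̄₂) < b*(p₂; θ̄₁); i.e., a consumer with larger uncertainty support chooses a strictly smaller baseline-period consumption. -/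
/-- A consumer with larger uncertainty support chooses a strictly smaller
baseline-period consumption: `b*(p₂; θ̄₂) < b*(p₂; θ̄₁)` for `θ̄₁ < θ̄₂`. -/
theorem stmt12 (γ qbar p₂ θb1 θb2 : ℝ) (hγ : 0 < γ) (hqbar : 0 < qbar)
    (hθb1 : 0 < θb1) (hp₂ : 0 < p₂) (hreg1 : p₂ < (2/3)*θb1*γ) (hθ : θb1 < θb2)
    (bstar : ℝ → ℝ)
    (hbstar : ∀ θb, bstar θb = qbar - p₂/(2*γ) + 2*p₂*θb/(2*θb*γ - p₂)) :
    bstar θb2 < bstar θb1 := by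
  rw [hbstar, hbstar]
  have h1 : 0 < 2*θb1*γ - p₂ := by nlinarith
  have h2 : 0 < 2*θb2*γ - p₂ := by nlinarith
  have : 2*p₂*θb2/(2*θb2*γ - p₂) < 2*p₂*θb1/(2*θb1*γ - p₂) := by
    rw [div_lt_div_iff₀ h2 h1]
    nlinarith [mul_pos (mul_pos hp₂ hp₂) (sub_pos.mpr hθ)]
  linarith
end
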